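/- For a De Morgan function f: (i) f ∈ ⟨DMA, Δ⟩ iff f preserves B2, K3 and P3; (ii) f ∈ ⟨DMA, Δ, n⟩ iff f preserves K3; (iii) f ∈ ⟨DMA, Δ, b⟩ iff f preserves P3; (iv) f ∈ ⟨DMA, Δ, ∂⟩ iff f preserves B2; (v) f ∈ ⟨DMA, Δ, id_{b↦n}⟩ iff f preserves both B2 and K3; (vi) f ∈ ⟨DMA, Δ, id_{n↦b}⟩ iff f preserves both B2 and P3. -/

import Mathlib

set_option autoImplicit false

/-- The four truth values of the Belnap–Dunn logic. -/
inductive DM4 : Type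
  | t
  | f
  | n
  | b
deriving DecidableEq

namespace DM4

/-- De Morgan negation. -/
def neg : DM4 → DM4
  | t => f
  | f => t
  | n => n
  | b => b

/-- Conflation. -/
def conf : DM4 → DM4
  | t => t
  | f => f
  | n => b
  | b => n

/-- Meet in the truth order. -/
def meet : DM4 → DM4 → DM4
  | f, _ => f
  | _, f => f
  | t, y => y
  | x, t => x
  | n, n => n
  | b, b => b
  | n, b => f
  | b, n => f

/-- Join in the truth order. -/
def join : DM4 → DM4 → DM4
  | t, _ => t
  | _, t => t
  | f, y => y
  | x, f => x
  | n, n => n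
  | b, b => b
  | n, b => t
  | b, n => t

/-- Meet in the information order (⊗). -/
def imeet : DM4 → DM4 → DM4
  | n, _ => n
  | _, n => n
  | b, y => y
  | x, b => x
  | t, t => t
  | f, f => f
  | t, f => n
  | f, t => n

/-- Join in the information order (⊕). -/
def ijoin : DM4 → DM4 → DM4
  | b, _ => b
  | _, b => b
  | n, y => y
  | x, n => x
  | t, t => t
  | f, f => f
  | t, f => b
  | f, t => b

/-- The truth order: least element `f`, greatest element `t`, with `n`, `b` incomparable. -/
def tle (x y : DM4) : Prop := x = y ∨ x = f ∨ y = t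

/-- The information order: least element `n`, greatest element `b`, with `t`, `f` incomparable. -/
def ile (x y : DM4) : Prop := x = y ∨ x = n ∨ y = b

/-- □: maps t to t and everything else to f. -/
def box : DM4 → DM4
  | t => t
  | _ => f

/-- ◇: maps f to f and everything else to t. -/
def diamond : DM4 → DM4
  | f => f
  | _ => t

/-- Δ: maps t, b to t and n, f to f. -/
def delta : DM4 → DM4
  | t => t
  | b => t
  | _ => f

/-- ∇: maps t, n to t and b, f to f. -/
def nabla : DM4 → DM4
  | t => t
  | n => t
  | _ => f

/-- id_{b↦n}: maps b to n and fixes t, f, n. -/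
def idbn : DM4 → DM4
  | b => n
  | x => x

/-- id_{n↦b}: maps n to b and fixes t, f, b. -/
def idnb : DM4 → DM4
  | n => b
  | x => x

/-- id_{n↦t}: maps n to t and fixes t, f, b. -/
def idnt : DM4 → DM4
  | n => t
  | x => x

/-- id_{b↦t}: maps b to t and fixes t, f, n. -/
def idbt : DM4 → DM4
  | b => t
  | x => x

/-- t_{n↦n}: maps n to n and everything else to t. -/
def tnn : DM4 → DM4
  | n => n
  | _ => t

/-- t_{b↦b}: maps b to b and everything else to t. -/
def tbb : DM4 → DM4
  | b => b
  | _ => t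

/-- The binary function pbp²₁. -/
def pbp1 : DM4 → DM4 → DM4
  | t, t => t | t, f => f | t, n => f | t, b => b
  | f, t => t | f, f => f | f, n => f | f, b => b
  | n, t => t | n, f => f | n, n => n | n, b => b
  | b, t => b | b, f => f | b, n => f | b, b => b

/-- The binary function pbp²₂. -/
def pbp2 : DM4 → DM4 → DM4
  | t, t => t | t, f => f | t, n => n | t, b => f
  | f, t => t | f, f => f | f, n => n | f, b => f
  | n, t => n | n, f => f | n, n => n | n, b => f
  | b, t => t | b, f => f | b, n => n | b, b => b

/-- The binary function mnh²₁. -/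
def mnh1 : DM4 → DM4 → DM4
  | t, t => f | t, f => f | t, n => n | t, b => b
  | f, t => f | f, f => f | f, n => n | f, b => b
  | n, t => f | n, f => f | n, n => n | n, b => f
  | b, t => f | b, f => f | b, n => n | b, b => b

/-- The binary function mnh²₂. -/
def mnh2 : DM4 → DM4 → DM4
  | t, t => f | t, f => f | t, n => n | t, b => b
  | f, t => f | f, f => f | f, n => n | f, b => b
  | n, t => f | n, f => f | n, n => n | n, b => b
  | b, t => f | b, f => f | b, n => f | b, b => b

/-- The binary function mhnp². -/
def mhnp2 : DM4 → DM4 → DM4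
  | t, _ => t
  | f, _ => t
  | n, b => f
  | n, _ => n
  | b, n => f
  | b, _ => b

/-- The binary function mnp²₁. -/
def mnp1 : DM4 → DM4 → DM4
  | t, b => b
  | t, _ => t
  | f, b => b
  | f, _ => t
  | n, b => f
  | n, _ => n
  | b, n => f
  | b, _ => b

/-- The binary function mnp²₂. -/
def mnp2 : DM4 → DM4 → DM4
  | t, _ => t
  | f, _ => t
  | n, _ => n
  | b, n => f
  | b, _ => b

/-- The binary function mnp²₃. -/
def mnp3 : DM4 → DM4 → DM4
  | t, n => n
  | t, _ => t
  | f, n => n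
  | f, _ => t
  | n, b => f
  | n, _ => n
  | b, n => f
  | b, _ => b

/-- The binary function mnp²₄. -/
def mnp4 : DM4 → DM4 → DM4
  | t, _ => t
  | f, _ => t
  | n, b => f
  | n, _ => n
  | b, _ => b

/-- The ternary function mhnp³. -/
def mhnp3 : DM4 → DM4 → DM4 → DM4
  | _, t, _ => f
  | _, f, _ => f
  | t, n, _ => n
  | f, n, _ => f
  | b, n, _ => f
  | n, n, b => f
  | n, n, _ => n
  | t, b, _ => b
  | f, b, _ => f
  | n, b, _ => f
  | b, b, n => f
  | b, b, _ => b

/-- The set of designated values. -/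
def Des : Set DM4 := {t, b}

/-- Designatedness as a Boolean predicate. -/
def des : DM4 → Bool
  | t => true
  | b => true
  | _ => false

/-- The protoimplication →_{t-max}. -/
def tmax (x y : DM4) : DM4 :=
  match des x, des y with
  | true, false => n
  | _, _ => t

/-- The protoimplication →_{i-max}. -/
def imax (x y : DM4) : DM4 :=
  match des x, des y with
  | true, false => f
  | _, _ => b

/-- The protoimplication ↔_{t-min}. -/
def tmin (x y : DM4) : DM4 := if x = y then b else f

/-- The protoimplication ↔_{i-min}. -/
def imin (x y : DM4) : DM4 := if x = y then t else n

/-- A binary operation is a protoimplication if it satisfies Reflexivity and Modus Ponens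
with respect to the designated set {t, b}. -/
def IsProtoimplication (r : DM4 → DM4 → DM4) : Prop :=
  (∀ a : DM4, r a a ∈ Des) ∧ ∀ a c : DM4, a ∈ Des → r a c ∈ Des → c ∈ Des

/-- `DMFun k` is the type of De Morgan functions of arity `k + 1` (arities are positive). -/
abbrev DMFun (k : ℕ) : Type := (Fin (k + 1) → DM4) → DM4

/-- Membership in the clone generated by the family of operations `S`
(`S k` is the set of generators of arity `k + 1`). -/
inductive InClone (S : ∀ k : ℕ, Set (DMFun k)) : ∀ k : ℕ, DMFun k → Prop
  | base {k : ℕ} {g : DMFun k} : g ∈ S k → InClone S k g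
  | proj {k : ℕ} (i : Fin (k + 1)) : InClone S k (fun x => x i)
  | comp {k m : ℕ} {g : DMFun m} {h : Fin (m + 1) → DMFun k} :
      InClone S m g → (∀ i, InClone S k (h i)) →
      InClone S k (fun x => g (fun i => h i x))

/-- A family of sets of De Morgan functions is a clone if it contains all projections
and is closed under composition. -/
structure IsClone (C : ∀ k : ℕ, Set (DMFun k)) : Prop where
  proj : ∀ (k : ℕ) (i : Fin (k + 1)), (fun x => x i) ∈ C k
  comp : ∀ (k m : ℕ) (g : DMFun m) (h : Fin (m + 1) → DMFun k),
      g ∈ C m → (∀ i, h i ∈ C k) → (fun x => g (fun i => h i x)) ∈ C k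

/-- The generating family consisting of a single unary operation. -/
def op1 (g : DM4 → DM4) : ∀ k : ℕ, Set (DMFun k)
  | 0 => {fun x => g (x 0)}
  | _ + 1 => ∅

/-- The generating family consisting of a single binary operation. -/
def op2 (g : DM4 → DM4 → DM4) : ∀ k : ℕ, Set (DMFun k)
  | 1 => {fun x => g (x 0) (x 1)}
  | _ => ∅

/-- The generating family consisting of a single ternary operation. -/
def op3 (g : DM4 → DM4 → DM4 → DM4) : ∀ k : ℕ, Set (DMFun k)
  | 2 => {fun x => g (x 0) (x 1) (x 2)}
  | _ => ∅

/-- Union of two families of operations. -/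
def funion (S T : ∀ k : ℕ, Set (DMFun k)) : ∀ k : ℕ, Set (DMFun k) := fun k => S k ∪ T k

infixr:65 " ⊹ " => funion

/-- The generators of DLat: ∧, ∨, t, f (constants as unary constant functions). -/
def DLatGen : ∀ k : ℕ, Set (DMFun k) :=
  op2 meet ⊹ op2 join ⊹ op1 (fun _ => t) ⊹ op1 (fun _ => f)

/-- The generators of DMA: ∧, ∨, t, f, −. -/
def DMAGen : ∀ k : ℕ, Set (DMFun k) := DLatGen ⊹ op1 neg

/-- The generators of BiLat: ∧, ∨, t, f, ⊗, ⊕, n, b. -/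
def BiLatGen : ∀ k : ℕ, Set (DMFun k) :=
  DLatGen ⊹ op2 imeet ⊹ op2 ijoin ⊹ op1 (fun _ => n) ⊹ op1 (fun _ => b)

/-- A De Morgan function is harmonious if it commutes with conflation. -/
def Harmonious {k : ℕ} (g : DMFun k) : Prop :=
  ∀ x : Fin (k + 1) → DM4, g (fun i => conf (x i)) = conf (g x)

/-- A De Morgan function is positive if it is monotone in the componentwise truth order. -/
def Positive {k : ℕ} (g : DMFun k) : Prop :=
  ∀ x y : Fin (k + 1) → DM4, (∀ i, tle (x i) (y i)) → tle (g x) (g y)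

/-- A De Morgan function is persistent if it is monotone in the componentwise
information order. -/
def Persistent {k : ℕ} (g : DMFun k) : Prop :=
  ∀ x y : Fin (k + 1) → DM4, (∀ i, ile (x i) (y i)) → ile (g x) (g y)

/-- A De Morgan function preserves a subset X of DM4 if it maps tuples from X into X. -/
def Preserves {k : ℕ} (g : DMFun k) (X : Set DM4) : Prop :=
  ∀ x : Fin (k + 1) → DM4, (∀ i, x i ∈ X) → g x ∈ X

def B2 : Set DM4 := {t, f}
def K3 : Set DM4 := {t, n, f}
def P3 : Set DM4 := {t, b, f}

/-- A unary operation as a De Morgan function. -/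
def toF1 (g : DM4 → DM4) : DMFun 0 := fun x => g (x 0)

/-- A binary operation as a De Morgan function. -/
def toF2 (g : DM4 → DM4 → DM4) : DMFun 1 := fun x => g (x 0) (x 1)

/-- A ternary operation as a De Morgan function. -/
def toF3 (g : DM4 → DM4 → DM4 → DM4) : DMFun 2 := fun x => g (x 0) (x 1) (x 2)

/-- The clone generated by a family of operations, as a family of sets. -/
def CloneOf (S : ∀ k : ℕ, Set (DMFun k)) : ∀ k : ℕ, Set (DMFun k) :=
  fun k => {g | InClone S k g}

/-- Inclusion of families of operations. -/
def CloneLE (C D : ∀ k : ℕ, Set (DMFun k)) : Prop := ∀ k : ℕ, C k ⊆ D k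

/-! The sets B2, K3 and P3 are closed under ∧, ∨, −, Δ and the constants t, f, so every member
of ⟨DMA, Δ⟩ preserves them; each further generator preserves the sets named in its item.

Conversely, a coordinate test `[x_i = c]` is a meet of two of Δ, ∇ = −Δ− applied to `±x_i`,
so ⟨DMA, Δ⟩ contains the indicator `[x = a]` of every tuple `a`. Hence `g` lies in a clone
`C ⊇ ⟨DMA, Δ⟩` as soon as each value `g a` is `p_a a` for some `p_a ∈ C`:
`g = ⋁_a ([x = a] ∧ p_a)`. The values t and f are constants. If `g` preserves P3 (resp. K3),
`g a = n` (resp. `b`) forces `a j = n` (resp. `b`) for some `j`, so the projection `x_j` serves;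
in items (ii) and (iii) the added constant serves instead. If `g` preserves B2, `g a ∈ {n, b}`
forces some `a j ∈ {n, b}`, and `x_j` or its image under ∂, id_{b↦n} or id_{n↦b} serves. -/

instance : Fintype DM4 := ⟨{t, f, n, b}, fun x => by cases x <;> decide⟩

section Composition

variable {S : ∀ k : ℕ, Set (DMFun k)} {k : ℕ} {g h : DMFun k}

theorem InClone.comp_unary {u : DM4 → DM4} (hu : InClone S 0 (toF1 u)) (hg : InClone S k g) :
    InClone S k (fun x => u (g x)) :=
  InClone.comp (h := fun _ => g) hu fun _ => hg

theorem InClone.comp_binary {u : DM4 → DM4 → DM4} (hu : InClone S 1 (toF2 u))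
    (hg : InClone S k g) (hh : InClone S k h) : InClone S k (fun x => u (g x) (h x)) :=
  InClone.comp (h := ![g, h]) hu fun i => by fin_cases i <;> assumption

theorem InClone.const {c : DM4} (hc : InClone S 0 (toF1 fun _ => c)) :
    InClone S k (fun _ => c) :=
  hc.comp_unary (InClone.proj 0)

end Composition

theorem meet_ite_t_f (p q : Prop) [Decidable p] [Decidable q] :
    meet (if p then t else f) (if q then t else f) = if p ∧ q then t else f := by
  by_cases p <;> by_cases q <;> simp_all [meet]

section DeltaClone

variable {S : ∀ k : ℕ, Set (DMFun k)} (hS : CloneLE (DMAGen ⊹ op1 delta) S) {k : ℕ}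
  {g h : DMFun k}
include hS

theorem inClone_meet (hg : InClone S k g) (hh : InClone S k h) :
    InClone S k (fun x => meet (g x) (h x)) :=
  (InClone.base (hS 1 (Or.inl (Or.inl (Or.inl rfl))))).comp_binary hg hh

theorem inClone_join (hg : InClone S k g) (hh : InClone S k h) :
    InClone S k (fun x => join (g x) (h x)) :=
  (InClone.base (hS 1 (Or.inl (Or.inl (Or.inr (Or.inl rfl)))))).comp_binary hg hh

theorem inClone_const_t : InClone S k (fun _ => t) :=
  (InClone.base (hS 0 (Or.inl (Or.inl (Or.inr (Or.inr (Or.inl rfl))))))).const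

theorem inClone_const_f : InClone S k (fun _ => f) :=
  (InClone.base (hS 0 (Or.inl (Or.inl (Or.inr (Or.inr (Or.inr rfl))))))).const

theorem inClone_neg (hg : InClone S k g) : InClone S k (fun x => neg (g x)) :=
  (InClone.base (hS 0 (Or.inl (Or.inr rfl)))).comp_unary hg

theorem inClone_delta (hg : InClone S k g) : InClone S k (fun x => delta (g x)) :=
  (InClone.base (hS 0 (Or.inr rfl))).comp_unary hg

theorem inClone_indicator (c : DM4) (hg : InClone S k g) :
    InClone S k (fun x => if g x = c then t else f) := by
  have hΔ := inClone_delta hS hg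
  have hΔneg := inClone_delta hS (inClone_neg hS hg)
  have hNabla := inClone_neg hS (inClone_delta hS (inClone_neg hS hg))
  have hNablaNeg := inClone_neg hS (inClone_delta hS (inClone_neg hS (inClone_neg hS hg)))
  cases c
  · convert inClone_meet hS hΔ hNabla using 1; funext x; cases g x <;> rfl
  · convert inClone_meet hS hΔneg hNablaNeg using 1; funext x; cases g x <;> rfl
  · convert inClone_meet hS hNabla hNablaNeg using 1; funext x; cases g x <;> rfl
  · convert inClone_meet hS hΔ hΔneg using 1; funext x; cases g x <;> rfl

theorem inClone_indicator_agree (a : Fin (k + 1) → DM4) (I : Finset (Fin (k + 1))) :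
    InClone S k (fun x => if ∀ i ∈ I, x i = a i then t else f) := by
  induction I using Finset.induction_on with
  | empty => simpa using inClone_const_t hS
  | insert i I _ ih =>
    convert inClone_meet hS (inClone_indicator hS (a i) (InClone.proj i)) ih using 1
    funext x
    simp only [meet_ite_t_f, Finset.forall_mem_insert]

theorem inClone_indicator_point (a : Fin (k + 1) → DM4) :
    InClone S k (fun x => if x = a then t else f) := by
  simpa [← funext_iff] using inClone_indicator_agree hS a Finset.univ

theorem inClone_of_forall_exists_eq
    (hg : ∀ a, ∃ p : DMFun k, InClone S k p ∧ p a = g a) : InClone S k g := by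
  choose p hp hpa using hg
  have hA : ∀ A : Finset (Fin (k + 1) → DM4),
      InClone S k (fun x => if x ∈ A then g x else f) := by
    intro A
    induction A using Finset.induction_on with
    | empty => simpa using inClone_const_f hS
    | insert a A ha ih =>
      convert inClone_join hS ih
        (inClone_meet hS (inClone_indicator_point hS a) (hp a)) using 1
      funext x
      by_cases hxa : x = a
      · subst hxa
        simp only [ha, Finset.mem_insert_self, if_true, if_false, hpa]
        cases g x <;> rfl
      · simp only [Finset.mem_insert, hxa, false_or, if_false]
        split_ifs <;> cases g x <;> rfl
  simpa using hA Finset.univ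

theorem inClone_of_forall_exists_unary {u : DM4 → DM4} (hu : InClone S 0 (toF1 u))
    (hg : ∀ a, g a = n ∨ g a = b → ∃ j, g a = a j ∨ g a = u (a j)) : InClone S k g := by
  refine inClone_of_forall_exists_eq hS fun a => ?_
  cases hga : g a
  · exact ⟨_, inClone_const_t hS, rfl⟩
  · exact ⟨_, inClone_const_f hS, rfl⟩
  all_goals
    obtain ⟨j, hj | hj⟩ := hg a (by simp [hga])
    · exact ⟨_, InClone.proj j, by rw [← hga, hj]⟩
    · exact ⟨_, hu.comp_unary (InClone.proj j), by rw [← hga, hj]⟩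

end DeltaClone

section Preservation

variable {X : Set DM4} {k : ℕ} {g : DMFun k}

theorem Preserves.of_inClone {S : ∀ k : ℕ, Set (DMFun k)}
    (hS : ∀ k, ∀ h ∈ S k, Preserves h X) (hg : InClone S k g) : Preserves g X := by
  induction hg with
  | base hb => exact hS _ _ hb
  | proj i => exact fun x hx => hx i
  | comp _ _ ihg ihh => exact fun x hx => ihg _ fun i => ihh i x hx

theorem preserves_of_mem_op1 {u : DM4 → DM4} (hu : ∀ a ∈ X, u a ∈ X) :
    ∀ k, ∀ h ∈ op1 u k, Preserves h X
  | 0, _, rfl => fun _ hx => hu _ (hx 0)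

theorem preserves_of_mem_op2 {u : DM4 → DM4 → DM4} (hu : ∀ a ∈ X, ∀ c ∈ X, u a c ∈ X) :
    ∀ k, ∀ h ∈ op2 u k, Preserves h X
  | 1, _, rfl => fun _ hx => hu _ (hx 0) _ (hx 1)

theorem Preserves.exists_apply_not_mem (hg : Preserves g X) {a : Fin (k + 1) → DM4}
    (ha : g a ∉ X) : ∃ j, a j ∉ X := by
  by_contra! h
  exact ha (hg a h)

theorem Preserves.exists_apply_eq_n (hg : Preserves g P3) {a : Fin (k + 1) → DM4}
    (ha : g a = n) : ∃ j, a j = n := by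
  obtain ⟨j, hj⟩ := hg.exists_apply_not_mem (a := a) (by simp [ha, P3])
  exact ⟨j, by cases h : a j <;> simp_all [P3]⟩

theorem Preserves.exists_apply_eq_b (hg : Preserves g K3) {a : Fin (k + 1) → DM4}
    (ha : g a = b) : ∃ j, a j = b := by
  obtain ⟨j, hj⟩ := hg.exists_apply_not_mem (a := a) (by simp [ha, K3])
  exact ⟨j, by cases h : a j <;> simp_all [K3]⟩

theorem Preserves.exists_apply_eq_n_or_b (hg : Preserves g B2) {a : Fin (k + 1) → DM4}
    (ha : g a = n ∨ g a = b) : ∃ j, a j = n ∨ a j = b := by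
  obtain ⟨j, hj⟩ := hg.exists_apply_not_mem (a := a) (by rcases ha with ha | ha <;> simp [ha, B2])
  exact ⟨j, by cases h : a j <;> simp_all [B2]⟩

end Preservation

structure IsDeltaSubalgebra (X : Set DM4) : Prop where
  meet_mem : ∀ a ∈ X, ∀ c ∈ X, meet a c ∈ X
  join_mem : ∀ a ∈ X, ∀ c ∈ X, join a c ∈ X
  t_mem : t ∈ X
  f_mem : f ∈ X
  neg_mem : ∀ a ∈ X, neg a ∈ X
  delta_mem : ∀ a ∈ X, delta a ∈ X

theorem isDeltaSubalgebra_B2 : IsDeltaSubalgebra B2 := by constructor <;> unfold B2 <;> decide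
theorem isDeltaSubalgebra_K3 : IsDeltaSubalgebra K3 := by constructor <;> unfold K3 <;> decide
theorem isDeltaSubalgebra_P3 : IsDeltaSubalgebra P3 := by constructor <;> unfold P3 <;> decide

namespace IsDeltaSubalgebra

variable {X : Set DM4} (hX : IsDeltaSubalgebra X) {k : ℕ} {g : DMFun k}
include hX

theorem preserves_of_mem (k : ℕ) : ∀ h ∈ (DMAGen ⊹ op1 delta) k, Preserves h X := by
  rintro h (((hh | hh | hh | hh) | hh) | hh)
  · exact preserves_of_mem_op2 hX.meet_mem k h hh
  · exact preserves_of_mem_op2 hX.join_mem k h hh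
  · exact preserves_of_mem_op1 (fun _ _ => hX.t_mem) k h hh
  · exact preserves_of_mem_op1 (fun _ _ => hX.f_mem) k h hh
  · exact preserves_of_mem_op1 hX.neg_mem k h hh
  · exact preserves_of_mem_op1 hX.delta_mem k h hh

theorem preserves_of_inClone (hg : InClone (DMAGen ⊹ op1 delta) k g) : Preserves g X :=
  .of_inClone hX.preserves_of_mem hg

theorem preserves_of_inClone_extend {u : DM4 → DM4} (hu : ∀ a ∈ X, u a ∈ X)
    (hg : InClone (DMAGen ⊹ op1 delta ⊹ op1 u) k g) : Preserves g X := by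
  refine .of_inClone ?_ hg
  rintro k h (hh | hh | hh)
  · exact hX.preserves_of_mem k h (.inl hh)
  · exact hX.preserves_of_mem k h (.inr hh)
  · exact preserves_of_mem_op1 hu k h hh

end IsDeltaSubalgebra

section Characterizations

variable {k : ℕ} {g : DMFun k}

theorem dmaDelta_le_extend (u : DM4 → DM4) :
    CloneLE (DMAGen ⊹ op1 delta) (DMAGen ⊹ op1 delta ⊹ op1 u) := by
  rintro k h (hh | hh)
  exacts [.inl hh, .inr (.inl hh)]

theorem inClone_extend_generator (u : DM4 → DM4) :
    InClone (DMAGen ⊹ op1 delta ⊹ op1 u) 0 (toF1 u) :=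
  .base (.inr (.inr rfl))

theorem inClone_dmaDelta_iff :
    InClone (DMAGen ⊹ op1 delta) k g ↔ Preserves g B2 ∧ Preserves g K3 ∧ Preserves g P3 := by
  refine ⟨fun hg => ⟨isDeltaSubalgebra_B2.preserves_of_inClone hg,
    isDeltaSubalgebra_K3.preserves_of_inClone hg, isDeltaSubalgebra_P3.preserves_of_inClone hg⟩,
    fun ⟨_, hK3, hP3⟩ => inClone_of_forall_exists_unary (u := id) (fun _ _ => id) (.proj 0) ?_⟩
  rintro a (ha | ha)
  · obtain ⟨j, hj⟩ := hP3.exists_apply_eq_n ha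
    exact ⟨j, .inl (ha.trans hj.symm)⟩
  · obtain ⟨j, hj⟩ := hK3.exists_apply_eq_b ha
    exact ⟨j, .inl (ha.trans hj.symm)⟩

theorem inClone_dmaDelta_const_n_iff :
    InClone (DMAGen ⊹ op1 delta ⊹ op1 fun _ => n) k g ↔ Preserves g K3 := by
  refine ⟨isDeltaSubalgebra_K3.preserves_of_inClone_extend (by unfold K3; decide),
    fun hK3 => inClone_of_forall_exists_unary (dmaDelta_le_extend _)
      (inClone_extend_generator _) ?_⟩
  rintro a (ha | ha)
  · exact ⟨0, .inr ha⟩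
  · obtain ⟨j, hj⟩ := hK3.exists_apply_eq_b ha
    exact ⟨j, .inl (ha.trans hj.symm)⟩

theorem inClone_dmaDelta_const_b_iff :
    InClone (DMAGen ⊹ op1 delta ⊹ op1 fun _ => b) k g ↔ Preserves g P3 := by
  refine ⟨isDeltaSubalgebra_P3.preserves_of_inClone_extend (by unfold P3; decide),
    fun hP3 => inClone_of_forall_exists_unary (dmaDelta_le_extend _)
      (inClone_extend_generator _) ?_⟩
  rintro a (ha | ha)
  · obtain ⟨j, hj⟩ := hP3.exists_apply_eq_n ha
    exact ⟨j, .inl (ha.trans hj.symm)⟩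
  · exact ⟨0, .inr ha⟩

theorem inClone_dmaDelta_conf_iff :
    InClone (DMAGen ⊹ op1 delta ⊹ op1 conf) k g ↔ Preserves g B2 := by
  refine ⟨isDeltaSubalgebra_B2.preserves_of_inClone_extend (by unfold B2; decide),
    fun hB2 => inClone_of_forall_exists_unary (dmaDelta_le_extend _)
      (inClone_extend_generator _) fun a ha => ?_⟩
  obtain ⟨j, hj⟩ := hB2.exists_apply_eq_n_or_b ha
  exact ⟨j, by rcases ha with ha | ha <;> rcases hj with hj | hj <;> simp [ha, hj, conf]⟩

theorem inClone_dmaDelta_idbn_iff :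
    InClone (DMAGen ⊹ op1 delta ⊹ op1 idbn) k g ↔ Preserves g B2 ∧ Preserves g K3 := by
  refine ⟨fun hg => ⟨isDeltaSubalgebra_B2.preserves_of_inClone_extend (by unfold B2; decide) hg,
    isDeltaSubalgebra_K3.preserves_of_inClone_extend (by unfold K3; decide) hg⟩,
    fun ⟨hB2, hK3⟩ => inClone_of_forall_exists_unary (dmaDelta_le_extend _)
      (inClone_extend_generator _) ?_⟩
  rintro a (ha | ha)
  · obtain ⟨j, hj | hj⟩ := hB2.exists_apply_eq_n_or_b (.inl ha)
    exacts [⟨j, .inl (ha.trans hj.symm)⟩, ⟨j, .inr (by simp [ha, hj, idbn])⟩]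
  · obtain ⟨j, hj⟩ := hK3.exists_apply_eq_b ha
    exact ⟨j, .inl (ha.trans hj.symm)⟩

theorem inClone_dmaDelta_idnb_iff :
    InClone (DMAGen ⊹ op1 delta ⊹ op1 idnb) k g ↔ Preserves g B2 ∧ Preserves g P3 := by
  refine ⟨fun hg => ⟨isDeltaSubalgebra_B2.preserves_of_inClone_extend (by unfold B2; decide) hg,
    isDeltaSubalgebra_P3.preserves_of_inClone_extend (by unfold P3; decide) hg⟩,
    fun ⟨hB2, hP3⟩ => inClone_of_forall_exists_unary (dmaDelta_le_extend _)
      (inClone_extend_generator _) ?_⟩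
  rintro a (ha | ha)
  · obtain ⟨j, hj⟩ := hP3.exists_apply_eq_n ha
    exact ⟨j, .inl (ha.trans hj.symm)⟩
  · obtain ⟨j, hj | hj⟩ := hB2.exists_apply_eq_n_or_b (.inr ha)
    exacts [⟨j, .inr (by simp [ha, hj, idnb])⟩, ⟨j, .inl (ha.trans hj.symm)⟩]

end Characterizations

/-- Characterization of the clones preserving subalgebras. -/
theorem clones_preserving_subalgebras (k : ℕ) (g : DMFun k) :
    (InClone (DMAGen ⊹ op1 delta) k g ↔
      Preserves g B2 ∧ Preserves g K3 ∧ Preserves g P3) ∧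
    (InClone (DMAGen ⊹ op1 delta ⊹ op1 (fun _ => n)) k g ↔ Preserves g K3) ∧
    (InClone (DMAGen ⊹ op1 delta ⊹ op1 (fun _ => b)) k g ↔ Preserves g P3) ∧
    (InClone (DMAGen ⊹ op1 delta ⊹ op1 conf) k g ↔ Preserves g B2) ∧
    (InClone (DMAGen ⊹ op1 delta ⊹ op1 idbn) k g ↔ Preserves g B2 ∧ Preserves g K3) ∧
    (InClone (DMAGen ⊹ op1 delta ⊹ op1 idnb) k g ↔ Preserves g B2 ∧ Preserves g P3) :=
  ⟨inClone_dmaDelta_iff, inClone_dmaDelta_const_n_iff, inClone_dmaDelta_const_b_iff,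
    inClone_dmaDelta_conf_iff, inClone_dmaDelta_idbn_iff, inClone_dmaDelta_idnb_iff⟩

end DM4
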